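/- arXiv:2109.12803 — 4 statements merged into one kernel-verified Lean document; each statement's English description precedes it below -/
import Mathlib

section
/- Fix B ∈ ℝ^{p×K} and ε ≥ 0. Then the worst-case expected loss over the Wasserstein ambiguity set equals the regularized empirical loss: sup_{Q ∈ Ω(ε)} ∫ ‖T_B z‖_r dQ(z) = (1/N) ∑_{i=1}^N ‖T_B ẑ_i‖_r + ε · ‖T_B‖, where both sides are interpreted in [0, ∞] (Theorem 1, core identity for a fixed coefficient matrix). -/
open MeasureTheory ENNReal

/-- Transfer the measurable structure of `α` to the type synonym `WithLp r α`. -/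
noncomputable instance WithLp.instMeasurableSpace' (r : ℝ≥0∞) (α : Type*) [m : MeasurableSpace α] :
    MeasurableSpace (WithLp r α) := m.comap WithLp.ofLp

/-!
The loss `z ↦ ‖T z‖` is `‖T‖`-Lipschitz, so transporting `P` at cost at most `ε` raises its
expectation by at most `ε ‖T‖`. Conversely, moving a fraction `t` of the mass of `P` by
`(ε / t) v`, with `‖v‖ < 1` and `‖T v‖` close to `‖T‖`, costs `ε ‖v‖ ≤ ε` and, by the triangle
inequality, raises the expectation by at least `ε ‖T v‖ - 2 t ∫ ‖T z‖ dP`; then let `t → 0`.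
-/

open Filter Topology
open scoped NNReal

theorem coe_mul_enorm_div_smul {G : Type*} [NormedAddCommGroup G] [NormedSpace ℝ G] {t : ℝ≥0}
    (ht : t ≠ 0) (ε : ℝ≥0) (x : G) : (t : ℝ≥0∞) * ‖((ε / t : ℝ≥0) : ℝ) • x‖ₑ = ε * ‖x‖ₑ := by
  rw [enorm_smul, Real.enorm_of_nonneg (by positivity), ENNReal.ofReal_coe_nnreal, ← mul_assoc,
    ← coe_mul, mul_div_cancel₀ _ ht]

namespace ContinuousLinearMap

variable {E F : Type*} [NormedAddCommGroup E] [NormedSpace ℝ E]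
  [NormedAddCommGroup F] [NormedSpace ℝ F]

theorem enorm_apply_le_add_mul_enorm_sub (T : E →L[ℝ] F) (x y : E) :
    ‖T x‖ₑ ≤ ‖T y‖ₑ + ‖T‖ₑ * ‖x - y‖ₑ :=
  calc ‖T x‖ₑ = ‖T y + T (x - y)‖ₑ := by rw [map_sub, add_sub_cancel]
    _ ≤ ‖T y‖ₑ + ‖T (x - y)‖ₑ := enorm_add_le _ _
    _ ≤ ‖T y‖ₑ + ‖T‖ₑ * ‖x - y‖ₑ := by gcongr; exact T.le_opENorm _

theorem opENorm_eq_iSup_unitBall (T : E →L[ℝ] F) :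
    ‖T‖ₑ = ⨆ v : {v : E // ‖v‖ < 1}, ‖T v‖ₑ := by
  refine le_antisymm (le_of_forall_lt fun c hc => ?_) (iSup_le fun v => ?_)
  · lift c to ℝ≥0 using ne_top_of_lt hc
    obtain ⟨v, hv, hcv⟩ := T.exists_lt_apply_of_lt_opNNNorm (ENNReal.coe_lt_coe.1 hc)
    exact lt_iSup_iff.2 ⟨⟨v, hv⟩, ENNReal.coe_lt_coe.2 hcv⟩
  · calc ‖T v‖ₑ ≤ ‖T‖ₑ * ‖(v : E)‖ₑ := T.le_opENorm v
      _ ≤ ‖T‖ₑ := mul_le_of_le_one_right' (by simpa [← ofReal_norm] using v.2.le)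

end ContinuousLinearMap

section WassersteinBall

variable {E : Type*} [NormedAddCommGroup E] [MeasurableSpace E]

def wassersteinBall (P : Measure E) (ε : ℝ≥0∞) : Set (Measure E) :=
  {Q | IsProbabilityMeasure Q ∧ ∃ Pl : Measure (E × E), IsProbabilityMeasure Pl ∧
    Pl.map Prod.fst = Q ∧ Pl.map Prod.snd = P ∧ ∫⁻ w, ‖w.1 - w.2‖ₑ ∂Pl ≤ ε}

theorem lintegral_le_add_mul_of_mem_wassersteinBall {P Q : Measure E} {ε : ℝ≥0∞} {L : ℝ≥0}
    {f : E → ℝ≥0∞} (hf : Measurable f) (hfL : ∀ x y, f x ≤ f y + L * ‖x - y‖ₑ)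
    (hQ : Q ∈ wassersteinBall P ε) :
    ∫⁻ z, f z ∂Q ≤ ∫⁻ z, f z ∂P + ε * L := by
  obtain ⟨-, Pl, -, rfl, rfl, hcost⟩ := hQ
  calc ∫⁻ z, f z ∂Pl.map Prod.fst = ∫⁻ w, f w.1 ∂Pl := lintegral_map hf measurable_fst
    _ ≤ ∫⁻ w, (f w.2 + L * ‖w.1 - w.2‖ₑ) ∂Pl := lintegral_mono fun w => hfL w.1 w.2
    _ = ∫⁻ z, f z ∂Pl.map Prod.snd + L * ∫⁻ w, ‖w.1 - w.2‖ₑ ∂Pl := by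
      rw [lintegral_add_left (f := fun w : E × E => f w.2) (hf.comp measurable_snd),
        lintegral_map hf measurable_snd, lintegral_const_mul' _ _ coe_ne_top]
    _ ≤ ∫⁻ z, f z ∂Pl.map Prod.snd + ε * L := by rw [mul_comm ε]; gcongr

noncomputable def shiftMixture (P : Measure E) (t : ℝ≥0∞) (u : E) : Measure E :=
  (1 - t) • P + t • P.map (· + u)

variable [MeasurableAdd E]

theorem shiftMixture_mem_wassersteinBall {P : Measure E} [IsProbabilityMeasure P] {t ε : ℝ≥0∞}
    (ht : t ≤ 1) {u : E} (hu : t * ‖u‖ₑ ≤ ε) : shiftMixture P t u ∈ wassersteinBall P ε := by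
  have hdiag : Measurable fun x : E => (x, x) := measurable_id.prodMk measurable_id
  have hshift : Measurable fun x : E => (x + u, x) := (measurable_add_const u).prodMk measurable_id
  set Pl := (1 - t) • P.map (fun x => (x, x)) + t • P.map (fun x => (x + u, x))
  have hsnd : Pl.map Prod.snd = P := by
    rw [Measure.map_add _ _ measurable_snd, Measure.map_smul, Measure.map_smul,
      Measure.map_map measurable_snd hdiag, Measure.map_map measurable_snd hshift]
    simp only [Function.comp_def, Measure.map_id', ← add_smul, tsub_add_cancel_of_le ht, one_smul]
  have hfst : Pl.map Prod.fst = shiftMixture P t u := by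
    rw [Measure.map_add _ _ measurable_fst, Measure.map_smul, Measure.map_smul,
      Measure.map_map measurable_fst hdiag, Measure.map_map measurable_fst hshift]
    simp only [Function.comp_def, Measure.map_id', shiftMixture]
  have hPl : IsProbabilityMeasure Pl := by
    constructor
    simpa [Measure.map_apply measurable_snd MeasurableSet.univ] using congr_arg (· Set.univ) hsnd
  refine ⟨hfst ▸ Measure.isProbabilityMeasure_map measurable_fst.aemeasurable, Pl, hPl, hfst,
    hsnd, ?_⟩
  calc ∫⁻ w, ‖w.1 - w.2‖ₑ ∂Pl
      ≤ (1 - t) * ∫⁻ x, ‖x - x‖ₑ ∂P + t * ∫⁻ x, ‖x + u - x‖ₑ ∂P := by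
        rw [lintegral_add_measure, lintegral_smul_measure, lintegral_smul_measure, smul_eq_mul,
          smul_eq_mul]
        gcongr <;> exact lintegral_map_le _ _
    _ = t * ‖u‖ₑ := by simp
    _ ≤ ε := hu

end WassersteinBall

namespace ContinuousLinearMap

variable {E F : Type*} [NormedAddCommGroup E] [NormedSpace ℝ E] [NormedAddCommGroup F]
  [NormedSpace ℝ F] [MeasurableSpace E] [OpensMeasurableSpace E] [MeasurableAdd E]

theorem lintegral_add_mul_enorm_le_lintegral_shiftMixture (T : E →L[ℝ] F) (P : Measure E)
    [IsProbabilityMeasure P] {t : ℝ≥0∞} (ht : t ≤ 1) (u : E) :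
    ∫⁻ z, ‖T z‖ₑ ∂P + t * ‖T u‖ₑ ≤
      ∫⁻ z, ‖T z‖ₑ ∂(shiftMixture P t u) + 2 * t * ∫⁻ z, ‖T z‖ₑ ∂P := by
  have hmeas : Measurable fun z => ‖T z‖ₑ := T.continuous.enorm.measurable
  set I := ∫⁻ z, ‖T z‖ₑ ∂P
  set J := ∫⁻ z, ‖T (z + u)‖ₑ ∂P
  have hJ : ‖T u‖ₑ ≤ J + I :=
    calc ‖T u‖ₑ = ∫⁻ _, ‖T u‖ₑ ∂P := by simp
      _ ≤ ∫⁻ z, (‖T (z + u)‖ₑ + ‖T z‖ₑ) ∂P := lintegral_mono fun z => by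
        simpa only [map_add, add_sub_cancel_left] using enorm_sub_le (a := T z + T u) (b := T z)
      _ = J + I := lintegral_add_right _ hmeas
  calc I + t * ‖T u‖ₑ = (1 - t) * I + t * (I + ‖T u‖ₑ) := by
        rw [mul_add, ← add_assoc, ← add_mul, tsub_add_cancel_of_le ht, one_mul]
    _ ≤ (1 - t) * I + t * (I + (J + I)) := by gcongr
    _ = ∫⁻ z, ‖T z‖ₑ ∂(shiftMixture P t u) + 2 * t * I := by
        rw [shiftMixture, lintegral_add_measure, lintegral_smul_measure, lintegral_smul_measure,
          lintegral_map hmeas (measurable_add_const u)]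
        simp only [smul_eq_mul, I, J]
        ring

theorem iSup_lintegral_enorm_wassersteinBall (T : E →L[ℝ] F) (P : Measure E)
    [IsProbabilityMeasure P] (ε : ℝ≥0) :
    ⨆ Q ∈ wassersteinBall P ε, ∫⁻ z, ‖T z‖ₑ ∂Q = ∫⁻ z, ‖T z‖ₑ ∂P + ε * ‖T‖ₑ := by
  have hmeas : Measurable fun z => ‖T z‖ₑ := T.continuous.enorm.measurable
  refine le_antisymm (iSup₂_le fun Q hQ =>
    lintegral_le_add_mul_of_mem_wassersteinBall hmeas T.enorm_apply_le_add_mul_enorm_sub hQ) ?_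
  set I := ∫⁻ z, ‖T z‖ₑ ∂P
  set S := ⨆ Q ∈ wassersteinBall P ε, ∫⁻ z, ‖T z‖ₑ ∂Q
  have hS {t : ℝ≥0∞} (ht : t ≤ 1) {u : E} (hu : t * ‖u‖ₑ ≤ ε) :
      ∫⁻ z, ‖T z‖ₑ ∂(shiftMixture P t u) ≤ S :=
    le_iSup₂ (f := fun Q _ => ∫⁻ z, ‖T z‖ₑ ∂Q) _ (shiftMixture_mem_wassersteinBall ht hu)
  rcases eq_or_ne I ⊤ with hI | hI
  · have hIS : I ≤ S := by simpa [shiftMixture] using hS zero_le_one (u := 0) (by simp)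
    simp [hI, top_le_iff.1 (hI ▸ hIS)]
  have hdir (v : E) (hv : ‖v‖ < 1) : I + ε * ‖T v‖ₑ ≤ S := by
    have hcont : Continuous fun t : ℝ≥0 => S + 2 * I * t :=
      continuous_const.add ((ENNReal.continuous_const_mul (by finiteness)).comp
        ENNReal.continuous_coe)
    have hlim : Tendsto (fun t : ℝ≥0 => S + 2 * I * t) (𝓝[>] 0) (𝓝 S) := by
      simpa using (hcont.tendsto 0).mono_left nhdsWithin_le_nhds
    refine ge_of_tendsto hlim ?_
    filter_upwards [Ioc_mem_nhdsGT zero_lt_one] with t ⟨ht0, ht1⟩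
    have key := T.lintegral_add_mul_enorm_le_lintegral_shiftMixture P (coe_le_one_iff.2 ht1)
      (((ε / t : ℝ≥0) : ℝ) • v)
    rw [map_smul, coe_mul_enorm_div_smul ht0.ne'] at key
    refine key.trans ?_
    rw [mul_right_comm]
    gcongr
    refine hS (coe_le_one_iff.2 ht1) ?_
    rw [coe_mul_enorm_div_smul ht0.ne']
    exact mul_le_of_le_one_right' (by simpa [← ofReal_norm] using hv.le)
  have : Nonempty {v : E // ‖v‖ < 1} := ⟨⟨0, by simp⟩⟩
  calc I + ε * ‖T‖ₑ = ⨆ v : {v : E // ‖v‖ < 1}, I + ε * ‖T v‖ₑ := by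
        rw [T.opENorm_eq_iSup_unitBall, mul_iSup, add_iSup]
    _ ≤ S := iSup_le fun v => hdir v v.2

end ContinuousLinearMap

theorem isProbabilityMeasure_inv_natCast_smul_sum_dirac {α : Type*} [MeasurableSpace α] {N : ℕ}
    (hN : 1 ≤ N) (z : Fin N → α) :
    IsProbabilityMeasure ((N : ℝ≥0∞)⁻¹ • ∑ i, Measure.dirac (z i)) := by
  constructor
  simp [ENNReal.inv_mul_cancel (by exact_mod_cast (Nat.one_le_iff_ne_zero.1 hN)) (natCast_ne_top N)]

theorem lintegral_inv_natCast_smul_sum_dirac {α : Type*} [MeasurableSpace α]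
    [MeasurableSingletonClass α] {N : ℕ} (z : Fin N → α) (f : α → ℝ≥0∞) :
    ∫⁻ x, f x ∂((N : ℝ≥0∞)⁻¹ • ∑ i, Measure.dirac (z i)) = (N : ℝ≥0∞)⁻¹ * ∑ i, f (z i) := by
  simp

theorem stmt0_general
    (p K N : ℕ) (hN : 1 ≤ N)
    (r : ℝ≥0∞) [Fact (1 ≤ r)]
    (ε : ℝ)
    -- `T` is the continuous linear map `T_B (x, θ) = θ - Bᵀ x` on
    -- `Z = ℝ^p × ℝ^K` equipped with the `ℓ_r` norm, mapping into `ℝ^K` with the `ℓ_r` norm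
    (T : WithLp r ((PiLp r fun _ : Fin p => ℝ) × (PiLp r fun _ : Fin K => ℝ)) →L[ℝ]
         (PiLp r fun _ : Fin K => ℝ))
    -- training samples
    (zhat : Fin N → WithLp r ((PiLp r fun _ : Fin p => ℝ) × (PiLp r fun _ : Fin K => ℝ))) :
    (⨆ (Q : Measure (WithLp r ((PiLp r fun _ : Fin p => ℝ) × (PiLp r fun _ : Fin K => ℝ))))
      (_ : IsProbabilityMeasure Q ∧
        ∃ Pl : Measure ((WithLp r ((PiLp r fun _ : Fin p => ℝ) × (PiLp r fun _ : Fin K => ℝ))) ×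
            (WithLp r ((PiLp r fun _ : Fin p => ℝ) × (PiLp r fun _ : Fin K => ℝ)))),
          IsProbabilityMeasure Pl ∧
          Pl.map Prod.fst = Q ∧
          Pl.map Prod.snd = (N : ℝ≥0∞)⁻¹ • ∑ i, Measure.dirac (zhat i) ∧
          ∫⁻ w, (‖w.1 - w.2‖₊ : ℝ≥0∞) ∂Pl ≤ ENNReal.ofReal ε),
      ∫⁻ z, (‖T z‖₊ : ℝ≥0∞) ∂Q)
    = (N : ℝ≥0∞)⁻¹ * ∑ i, (‖T (zhat i)‖₊ : ℝ≥0∞) + ENNReal.ofReal ε * (‖T‖₊ : ℝ≥0∞) := by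
  have := isProbabilityMeasure_inv_natCast_smul_sum_dirac hN zhat
  have h := T.iSup_lintegral_enorm_wassersteinBall ((N : ℝ≥0∞)⁻¹ • ∑ i, Measure.dirac (zhat i))
    ε.toNNReal
  rw [lintegral_inv_natCast_smul_sum_dirac] at h
  -- equal to the goal up to unfolding `wassersteinBall`, `‖·‖ₑ` and `ENNReal.ofReal`
  exact h

theorem stmt0
    (p K N : ℕ) (hp : 1 ≤ p) (hK : 1 ≤ K) (hN : 1 ≤ N)
    (r : ℝ≥0∞) [Fact (1 ≤ r)] (hr' : r ≠ ∞)
    (B : Matrix (Fin p) (Fin K) ℝ)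
    (ε : ℝ) (hε : 0 ≤ ε)
    -- `T` is the continuous linear map `T_B (x, θ) = θ - Bᵀ x` on
    -- `Z = ℝ^p × ℝ^K` equipped with the `ℓ_r` norm, mapping into `ℝ^K` with the `ℓ_r` norm
    (T : WithLp r ((PiLp r fun _ : Fin p => ℝ) × (PiLp r fun _ : Fin K => ℝ)) →L[ℝ]
         (PiLp r fun _ : Fin K => ℝ))
    (hT : ∀ z, (WithLp.equiv r _) (T z) =
        (WithLp.equiv r _) ((WithLp.equiv r _ z).2) -
          Matrix.mulVec B.transpose ((WithLp.equiv r _) ((WithLp.equiv r _ z).1)))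
    -- training samples
    (zhat : Fin N → WithLp r ((PiLp r fun _ : Fin p => ℝ) × (PiLp r fun _ : Fin K => ℝ))) :
    (⨆ (Q : Measure (WithLp r ((PiLp r fun _ : Fin p => ℝ) × (PiLp r fun _ : Fin K => ℝ))))
      (_ : IsProbabilityMeasure Q ∧
        ∃ Pl : Measure ((WithLp r ((PiLp r fun _ : Fin p => ℝ) × (PiLp r fun _ : Fin K => ℝ))) ×
            (WithLp r ((PiLp r fun _ : Fin p => ℝ) × (PiLp r fun _ : Fin K => ℝ)))),
          IsProbabilityMeasure Pl ∧
          Pl.map Prod.fst = Q ∧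
          Pl.map Prod.snd = (N : ℝ≥0∞)⁻¹ • ∑ i, Measure.dirac (zhat i) ∧
          ∫⁻ w, (‖w.1 - w.2‖₊ : ℝ≥0∞) ∂Pl ≤ ENNReal.ofReal ε),
      ∫⁻ z, (‖T z‖₊ : ℝ≥0∞) ∂Q)
    = (N : ℝ≥0∞)⁻¹ * ∑ i, (‖T (zhat i)‖₊ : ℝ≥0∞) + ENNReal.ofReal ε * (‖T‖₊ : ℝ≥0∞) :=
  stmt0_general p K N hN r ε T zhat
end

section
/- For every ε ≥ 0, the distributionally robust multi-output regression problem and its regularized empirical counterpart have equal optimal values: inf_{B ∈ ℝ^{p×K}} sup_{Q ∈ Ω(ε)} ∫ ‖θ − Bᵀx‖_r dQ(x, θ) = inf_{B ∈ ℝ^{p×K}} [ (1/N) ∑_{i=1}^N ‖θ̂_i − Bᵀx̂_i‖_r + ε · ‖T_B‖ ], where both inner expressions are interpreted in [0, ∞] and ẑ_i = (x̂_i, θ̂_i) (Theorem 1). -/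
open MeasureTheory ENNReal

open NNReal Filter Topology

/-!
The loss `z ↦ ‖f z‖` is `‖f‖`-Lipschitz, so along any coupling of `Q` with the nominal
distribution `μ` its expectation under `Q` exceeds that under `μ` by at most `‖f‖` times the
transport cost; this gives `≤`. Conversely, moving a fraction `γ` of the mass of `μ` by
`(ε / γ) • v` costs at most `ε` and raises the expected loss by at least
`ε ‖f v‖ - 2 γ ∫ ‖f‖ dμ`; letting `γ → 0` and taking `v` of near-maximal gain in the unit ball
gives `≥`. The theorem is the case `f = T_B`, `μ = P̂_N`, for every `B`.
-/

theorem enorm_add_mul_enorm_sub_le {E : Type*} [SeminormedAddCommGroup E] (a b : E) {γ : ℝ≥0∞}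
    (hγ : γ ≤ 1) :
    ‖a‖ₑ + γ * ‖b - a‖ₑ ≤ (1 - γ) * ‖a‖ₑ + γ * ‖b‖ₑ + 2 * γ * ‖a‖ₑ :=
  calc ‖a‖ₑ + γ * ‖b - a‖ₑ ≤ ((1 - γ) + γ) * ‖a‖ₑ + γ * (‖b‖ₑ + ‖a‖ₑ) := by
        rw [tsub_add_cancel_of_le hγ, one_mul]; gcongr; exact enorm_sub_le
    _ = (1 - γ) * ‖a‖ₑ + γ * ‖b‖ₑ + 2 * γ * ‖a‖ₑ := by ring

theorem ENNReal.le_of_forall_pos_le_add_mul {a b c : ℝ≥0∞} (hc : c ≠ ∞)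
    (h : ∀ γ : ℝ≥0, 0 < γ → γ ≤ 1 → a ≤ b + γ * c) : a ≤ b := by
  have hlim : Tendsto (fun γ : ℝ≥0 => b + γ * c) (𝓝[>] 0) (𝓝 b) := by
    have : Tendsto (fun γ : ℝ≥0 => b + γ * c) (𝓝 0) (𝓝 (b + (0 : ℝ≥0) * c)) :=
      tendsto_const_nhds.add
        (ENNReal.Tendsto.mul_const (ENNReal.continuous_coe.tendsto 0) (Or.inr hc))
    simpa using this.mono_left nhdsWithin_le_nhds
  refine ge_of_tendsto hlim ?_
  filter_upwards [self_mem_nhdsWithin, Ioc_mem_nhdsGT one_pos] with γ hγ₀ hγ₁ using h γ hγ₀ hγ₁.2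

theorem ContinuousLinearMap.enorm_eq_iSup_enorm_apply {E F : Type*} [NormedAddCommGroup E]
    [NormedSpace ℝ E] [SeminormedAddCommGroup F] [NormedSpace ℝ F] (f : E →L[ℝ] F) :
    ‖f‖ₑ = ⨆ v : {v : E // ‖v‖ₑ ≤ 1}, ‖f v‖ₑ := by
  refine le_antisymm (le_of_forall_nnreal_lt fun c hc => ?_) (iSup_le fun v => ?_)
  · obtain ⟨v, hv, hcv⟩ := f.exists_lt_apply_of_lt_opNNNorm (coe_lt_coe.mp hc)
    exact le_iSup_of_le ⟨v, coe_le_one_iff.mpr hv.le⟩ (coe_le_coe.mpr hcv.le)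
  · calc ‖f v‖ₑ ≤ ‖f‖ₑ * ‖(v : E)‖ₑ := f.le_opENorm v
      _ ≤ ‖f‖ₑ := mul_le_of_le_one_right' v.2

namespace Wasserstein

variable {Z E : Type*} [NormedAddCommGroup Z] [MeasurableSpace Z]

def ball (μ : Measure Z) (ε : ℝ≥0∞) : Set (Measure Z) :=
  {Q | IsProbabilityMeasure Q ∧
    ∃ Pl : Measure (Z × Z), IsProbabilityMeasure Pl ∧ Pl.map Prod.fst = Q ∧
      Pl.map Prod.snd = μ ∧ ∫⁻ w, ‖w.1 - w.2‖ₑ ∂Pl ≤ ε}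

theorem mix_map_mem_ball (μ : Measure Z) [IsProbabilityMeasure μ] {T : Z → Z}
    (hT : Measurable T) {γ ε : ℝ≥0∞} (hγ : γ ≤ 1) (hcost : γ * ∫⁻ z, ‖T z - z‖ₑ ∂μ ≤ ε) :
    (1 - γ) • μ + γ • μ.map T ∈ ball μ ε := by
  have hdiag : Measurable fun z : Z => (z, z) := measurable_id.prodMk measurable_id
  have hgraph : Measurable fun z : Z => (T z, z) := hT.prodMk measurable_id
  set Pl := (1 - γ) • μ.map (fun z => (z, z)) + γ • μ.map (fun z => (T z, z))
  have hmap {g : Z × Z → Z} (hg : Measurable g) :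
      Pl.map g = (1 - γ) • μ.map (fun z => g (z, z)) + γ • μ.map (fun z => g (T z, z)) := by
    rw [Measure.map_add _ _ hg, Measure.map_smul, Measure.map_smul, Measure.map_map hg hdiag,
      Measure.map_map hg hgraph]
    rfl
  have hfst : Pl.map Prod.fst = (1 - γ) • μ + γ • μ.map T := by
    rw [hmap measurable_fst, Measure.map_id']
  have hsnd : Pl.map Prod.snd = μ := by
    rw [hmap measurable_snd, Measure.map_id', ← add_smul, tsub_add_cancel_of_le hγ, one_smul]
  have hPl : IsProbabilityMeasure Pl := by
    have : IsProbabilityMeasure (Pl.map Prod.snd) := hsnd ▸ inferInstance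
    exact Measure.isProbabilityMeasure_of_map Prod.snd
  refine ⟨hfst ▸ Measure.isProbabilityMeasure_map measurable_fst.aemeasurable, Pl, hPl, hfst,
    hsnd, ?_⟩
  calc ∫⁻ w, ‖w.1 - w.2‖ₑ ∂Pl
      = (1 - γ) * ∫⁻ w, ‖w.1 - w.2‖ₑ ∂μ.map (fun z => (z, z))
          + γ * ∫⁻ w, ‖w.1 - w.2‖ₑ ∂μ.map (fun z => (T z, z)) := by
        rw [lintegral_add_measure, lintegral_smul_measure, lintegral_smul_measure, smul_eq_mul,
          smul_eq_mul]
    _ ≤ (1 - γ) * ∫⁻ z, ‖z - z‖ₑ ∂μ + γ * ∫⁻ z, ‖T z - z‖ₑ ∂μ := by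
        gcongr <;> exact lintegral_map_le _ _
    _ ≤ ε := by simpa using hcost

theorem self_mem_ball (μ : Measure Z) [IsProbabilityMeasure μ] (ε : ℝ≥0∞) : μ ∈ ball μ ε := by
  simpa using mix_map_mem_ball μ measurable_id zero_le_one (ε := ε) (by simp)

variable [NormedSpace ℝ Z] [NormedAddCommGroup E] [NormedSpace ℝ E]

theorem lintegral_enorm_apply_le_of_map_fst_of_map_snd [OpensMeasurableSpace Z]
    (f : Z →L[ℝ] E) {Q μ : Measure Z} {Pl : Measure (Z × Z)}
    (hfst : Pl.map Prod.fst = Q) (hsnd : Pl.map Prod.snd = μ) :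
    ∫⁻ z, ‖f z‖ₑ ∂Q ≤ ∫⁻ z, ‖f z‖ₑ ∂μ + ‖f‖ₑ * ∫⁻ w, ‖w.1 - w.2‖ₑ ∂Pl := by
  have hf : Measurable fun z => ‖f z‖ₑ := f.continuous.enorm.measurable
  have hpt (w : Z × Z) : ‖f w.1‖ₑ ≤ ‖f w.2‖ₑ + ‖f‖ₑ * ‖w.1 - w.2‖ₑ :=
    calc ‖f w.1‖ₑ = ‖f w.2 + f (w.1 - w.2)‖ₑ := by rw [map_sub, add_sub_cancel]
      _ ≤ ‖f w.2‖ₑ + ‖f (w.1 - w.2)‖ₑ := enorm_add_le _ _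
      _ ≤ ‖f w.2‖ₑ + ‖f‖ₑ * ‖w.1 - w.2‖ₑ := by gcongr; exact f.le_opENorm _
  rw [← hfst, ← hsnd, lintegral_map hf measurable_fst, lintegral_map hf measurable_snd,
    ← lintegral_const_mul' _ _ enorm_ne_top]
  calc ∫⁻ w, ‖f w.1‖ₑ ∂Pl ≤ ∫⁻ w, ‖f w.2‖ₑ + ‖f‖ₑ * ‖w.1 - w.2‖ₑ ∂Pl := lintegral_mono hpt
    _ = _ := lintegral_add_left (hf.comp measurable_snd) _

theorem iSup_lintegral_enorm_le [OpensMeasurableSpace Z] (f : Z →L[ℝ] E) (μ : Measure Z)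
    (ε : ℝ≥0∞) :
    ⨆ Q ∈ ball μ ε, ∫⁻ z, ‖f z‖ₑ ∂Q ≤ ∫⁻ z, ‖f z‖ₑ ∂μ + ε * ‖f‖ₑ := by
  refine iSup₂_le fun Q ⟨_, Pl, _, hfst, hsnd, hcost⟩ => ?_
  calc ∫⁻ z, ‖f z‖ₑ ∂Q ≤ ∫⁻ z, ‖f z‖ₑ ∂μ + ‖f‖ₑ * ∫⁻ w, ‖w.1 - w.2‖ₑ ∂Pl :=
        lintegral_enorm_apply_le_of_map_fst_of_map_snd f hfst hsnd
    _ ≤ ∫⁻ z, ‖f z‖ₑ ∂μ + ε * ‖f‖ₑ := by rw [mul_comm]; gcongr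

theorem lintegral_add_mul_enorm_apply_le_iSup_add (f : Z →L[ℝ] E) (μ : Measure Z)
    [IsProbabilityMeasure μ] [BorelSpace Z] {ε γ : ℝ≥0} (hγ₀ : 0 < γ) (hγ₁ : γ ≤ 1) {v : Z}
    (hv : ‖v‖ₑ ≤ 1) :
    ∫⁻ z, ‖f z‖ₑ ∂μ + ε * ‖f v‖ₑ ≤
      (⨆ Q ∈ ball μ ε, ∫⁻ z, ‖f z‖ₑ ∂Q) + γ * (2 * ∫⁻ z, ‖f z‖ₑ ∂μ) := by
  set s : ℝ≥0 := ε / γ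
  have hγs : (γ : ℝ≥0∞) * s = ε := by rw [← coe_mul, mul_div_cancel₀ _ hγ₀.ne']
  -- Move the fraction `γ` of the mass by `s • v`; this costs `γ * s * ‖v‖ₑ ≤ ε`.
  set T : Z → Z := fun z => z + (s : ℝ) • v
  have hT : Measurable T := measurable_add_const _
  have hf : Measurable fun z => ‖f z‖ₑ := f.continuous.enorm.measurable
  have hshift (z : Z) : ‖f (T z) - f z‖ₑ = s * ‖f v‖ₑ := by
    rw [← map_sub, add_sub_cancel_left, map_smul, enorm_smul, NNReal.enorm_eq]
  have hQ : (1 - γ : ℝ≥0∞) • μ + (γ : ℝ≥0∞) • μ.map T ∈ ball μ ε := by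
    refine mix_map_mem_ball μ hT (by exact_mod_cast hγ₁) ?_
    simp_rw [T, add_sub_cancel_left, enorm_smul, NNReal.enorm_eq, lintegral_const,
      measure_univ, mul_one, ← mul_assoc, hγs]
    exact mul_le_of_le_one_right' hv
  calc ∫⁻ z, ‖f z‖ₑ ∂μ + ε * ‖f v‖ₑ
      = ∫⁻ z, ‖f z‖ₑ + γ * ‖f (T z) - f z‖ₑ ∂μ := by
        simp_rw [hshift, ← mul_assoc, hγs]
        rw [lintegral_add_right _ measurable_const, lintegral_const, measure_univ, mul_one]
    _ ≤ ∫⁻ z, (1 - γ) * ‖f z‖ₑ + γ * ‖f (T z)‖ₑ + 2 * γ * ‖f z‖ₑ ∂μ :=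
        lintegral_mono fun z => enorm_add_mul_enorm_sub_le _ _ (by exact_mod_cast hγ₁)
    _ = ∫⁻ z, ‖f z‖ₑ ∂((1 - γ : ℝ≥0∞) • μ + (γ : ℝ≥0∞) • μ.map T)
          + γ * (2 * ∫⁻ z, ‖f z‖ₑ ∂μ) := by
        rw [lintegral_add_right _ (hf.const_mul _), lintegral_add_left (hf.const_mul _),
          lintegral_add_measure, lintegral_smul_measure, lintegral_smul_measure,
          lintegral_map hf hT, lintegral_const_mul _ hf, lintegral_const_mul' _ _ coe_ne_top,
          lintegral_const_mul _ hf]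
        simp only [smul_eq_mul]
        ring
    _ ≤ (⨆ Q ∈ ball μ ε, ∫⁻ z, ‖f z‖ₑ ∂Q) + γ * (2 * ∫⁻ z, ‖f z‖ₑ ∂μ) := by
        gcongr
        exact le_iSup₂ (f := fun Q _ => ∫⁻ z, ‖f z‖ₑ ∂Q) _ hQ

theorem iSup_lintegral_enorm_eq (f : Z →L[ℝ] E) (μ : Measure Z) [IsProbabilityMeasure μ]
    [BorelSpace Z] (ε : ℝ≥0) :
    ⨆ Q ∈ ball μ ε, ∫⁻ z, ‖f z‖ₑ ∂Q = ∫⁻ z, ‖f z‖ₑ ∂μ + ε * ‖f‖ₑ := by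
  refine le_antisymm (iSup_lintegral_enorm_le f μ ε) ?_
  set S := ⨆ Q ∈ ball μ ε, ∫⁻ z, ‖f z‖ₑ ∂Q
  have hμS : ∫⁻ z, ‖f z‖ₑ ∂μ ≤ S :=
    le_iSup₂ (f := fun Q _ => ∫⁻ z, ‖f z‖ₑ ∂Q) μ (self_mem_ball μ ε)
  by_cases hC : ∫⁻ z, ‖f z‖ₑ ∂μ = ∞
  · exact le_top.trans (hC ▸ hμS)
  have : Nonempty {v : Z // ‖v‖ₑ ≤ 1} := ⟨⟨0, by simp⟩⟩
  rw [f.enorm_eq_iSup_enorm_apply, ENNReal.mul_iSup, ENNReal.add_iSup]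
  refine iSup_le fun v => le_of_forall_pos_le_add_mul (mul_ne_top (ofNat_ne_top (n := 2)) hC) ?_
  exact fun γ hγ₀ hγ₁ => lintegral_add_mul_enorm_apply_le_iSup_add f μ hγ₀ hγ₁ v.2

end Wasserstein

section Empirical

variable {α : Type*} [MeasurableSpace α] {N : ℕ}

theorem isProbabilityMeasure_inv_smul_sum_dirac (hN : N ≠ 0) (z : Fin N → α) :
    IsProbabilityMeasure ((N : ℝ≥0∞)⁻¹ • ∑ i, Measure.dirac (z i)) := by
  constructor
  simp [ENNReal.inv_mul_cancel (Nat.cast_ne_zero.mpr hN) (natCast_ne_top N)]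

theorem lintegral_inv_smul_sum_dirac {g : α → ℝ≥0∞} (hg : Measurable g) (z : Fin N → α) :
    ∫⁻ x, g x ∂((N : ℝ≥0∞)⁻¹ • ∑ i, Measure.dirac (z i)) = (N : ℝ≥0∞)⁻¹ * ∑ i, g (z i) := by
  simp_rw [lintegral_smul_measure, lintegral_finsetSum_measure, lintegral_dirac' _ hg, smul_eq_mul]

end Empirical

theorem stmt1_general
    (p K N : ℕ) (hN : 1 ≤ N)
    (r : ℝ≥0∞) [Fact (1 ≤ r)]
    (ε : ℝ)
    -- `T B` is the continuous linear map `T_B (x, θ) = θ - Bᵀ x` on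
    -- `Z = ℝ^p × ℝ^K` equipped with the `ℓ_r` norm, mapping into `ℝ^K` with the `ℓ_r` norm
    (T : Matrix (Fin p) (Fin K) ℝ →
        (WithLp r ((PiLp r fun _ : Fin p => ℝ) × (PiLp r fun _ : Fin K => ℝ)) →L[ℝ]
         (PiLp r fun _ : Fin K => ℝ)))
    -- training samples
    (zhat : Fin N → WithLp r ((PiLp r fun _ : Fin p => ℝ) × (PiLp r fun _ : Fin K => ℝ))) :
    (⨅ B : Matrix (Fin p) (Fin K) ℝ,
      ⨆ (Q : Measure (WithLp r ((PiLp r fun _ : Fin p => ℝ) × (PiLp r fun _ : Fin K => ℝ))))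
        (_ : IsProbabilityMeasure Q ∧
          ∃ Pl : Measure ((WithLp r ((PiLp r fun _ : Fin p => ℝ) × (PiLp r fun _ : Fin K => ℝ))) ×
              (WithLp r ((PiLp r fun _ : Fin p => ℝ) × (PiLp r fun _ : Fin K => ℝ)))),
            IsProbabilityMeasure Pl ∧
            Pl.map Prod.fst = Q ∧
            Pl.map Prod.snd = (N : ℝ≥0∞)⁻¹ • ∑ i, Measure.dirac (zhat i) ∧
            ∫⁻ w, (‖w.1 - w.2‖₊ : ℝ≥0∞) ∂Pl ≤ ENNReal.ofReal ε),
        ∫⁻ z, (‖T B z‖₊ : ℝ≥0∞) ∂Q)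
    = ⨅ B : Matrix (Fin p) (Fin K) ℝ,
        ((N : ℝ≥0∞)⁻¹ * ∑ i, (‖T B (zhat i)‖₊ : ℝ≥0∞) + ENNReal.ofReal ε * (‖T B‖₊ : ℝ≥0∞)) := by
  have : BorelSpace (WithLp r ((PiLp r fun _ : Fin p => ℝ) × (PiLp r fun _ : Fin K => ℝ))) :=
    WithLp.borelSpace r _ _
  have := isProbabilityMeasure_inv_smul_sum_dirac (Nat.one_le_iff_ne_zero.mp hN) zhat
  refine iInf_congr fun B => (Wasserstein.iSup_lintegral_enorm_eq (T B) _ ε.toNNReal).trans ?_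
  rw [lintegral_inv_smul_sum_dirac (T B).continuous.enorm.measurable]
  -- `ENNReal.ofReal ε = ↑ε.toNNReal` and `‖x‖ₑ = ↑‖x‖₊` hold by definition.
  rfl

theorem stmt1
    (p K N : ℕ) (hp : 1 ≤ p) (hK : 1 ≤ K) (hN : 1 ≤ N)
    (r : ℝ≥0∞) [Fact (1 ≤ r)] (hr' : r ≠ ∞)
    (ε : ℝ) (hε : 0 ≤ ε)
    -- `T B` is the continuous linear map `T_B (x, θ) = θ - Bᵀ x` on
    -- `Z = ℝ^p × ℝ^K` equipped with the `ℓ_r` norm, mapping into `ℝ^K` with the `ℓ_r` norm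
    (T : Matrix (Fin p) (Fin K) ℝ →
        (WithLp r ((PiLp r fun _ : Fin p => ℝ) × (PiLp r fun _ : Fin K => ℝ)) →L[ℝ]
         (PiLp r fun _ : Fin K => ℝ)))
    (hT : ∀ B z, (WithLp.equiv r _) (T B z) =
        (WithLp.equiv r _) ((WithLp.equiv r _ z).2) -
          Matrix.mulVec B.transpose ((WithLp.equiv r _) ((WithLp.equiv r _ z).1)))
    -- training samples
    (zhat : Fin N → WithLp r ((PiLp r fun _ : Fin p => ℝ) × (PiLp r fun _ : Fin K => ℝ))) :
    (⨅ B : Matrix (Fin p) (Fin K) ℝ,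
      ⨆ (Q : Measure (WithLp r ((PiLp r fun _ : Fin p => ℝ) × (PiLp r fun _ : Fin K => ℝ))))
        (_ : IsProbabilityMeasure Q ∧
          ∃ Pl : Measure ((WithLp r ((PiLp r fun _ : Fin p => ℝ) × (PiLp r fun _ : Fin K => ℝ))) ×
              (WithLp r ((PiLp r fun _ : Fin p => ℝ) × (PiLp r fun _ : Fin K => ℝ)))),
            IsProbabilityMeasure Pl ∧
            Pl.map Prod.fst = Q ∧
            Pl.map Prod.snd = (N : ℝ≥0∞)⁻¹ • ∑ i, Measure.dirac (zhat i) ∧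
            ∫⁻ w, (‖w.1 - w.2‖₊ : ℝ≥0∞) ∂Pl ≤ ENNReal.ofReal ε),
        ∫⁻ z, (‖T B z‖₊ : ℝ≥0∞) ∂Q)
    = ⨅ B : Matrix (Fin p) (Fin K) ℝ,
        ((N : ℝ≥0∞)⁻¹ * ∑ i, (‖T B (zhat i)‖₊ : ℝ≥0∞) + ENNReal.ofReal ε * (‖T B‖₊ : ℝ≥0∞)) :=
  stmt1_general p K N hN r ε T zhat
end

section
/- Fix B ∈ ℝ^{p×K}, ε ≥ 0, and δ > 0. Then there exist a probability measure Q on Z and a probability measure Π on Z × Z whose first and second marginals are Q and P̂_N respectively, such that ∫ ‖z − w‖_r dΠ(z, w) ≤ ε and ∫ ‖T_B z‖_r dQ(z) ≥ (1/N) ∑_{i=1}^N ‖T_B ẑ_i‖_r + ε · ‖T_B‖ − δ (lower-bound direction of the worst-case expectation identity in Theorem 1). -/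
/-!
Move the fraction `1 / n` of the mass of every sample `ẑᵢ` by `n • v`, where `‖v‖ ≤ ε` and
`ε ‖T‖ ≤ ‖T v‖ + δ / 2`. The transport cost is `‖v‖ ≤ ε`, and since
`‖T ẑᵢ + n • T v‖ ≥ n ‖T v‖ - ‖T ẑᵢ‖`, the expectation of `‖T z‖` increases by at least
`‖T v‖ - (2 / n) · (1 / N) ∑ᵢ ‖T ẑᵢ‖`, which exceeds `ε ‖T‖ - δ` once `n` is large.
-/

open MeasureTheory ENNReal

namespace MeasureTheory.Measure

variable {α β : Type*} [MeasurableSpace α] [MeasurableSpace β] {N : ℕ}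

noncomputable def empiricalMeasure (x : Fin N → α) : Measure α :=
  (N : ℝ≥0∞)⁻¹ • ∑ i, dirac (x i)

instance isProbabilityMeasure_empiricalMeasure [NeZero N] (x : Fin N → α) :
    IsProbabilityMeasure (empiricalMeasure x) := by
  constructor
  simp [empiricalMeasure, ENNReal.inv_mul_cancel (NeZero.ne _)]

lemma map_empiricalMeasure {f : α → β} (hf : Measurable f) (x : Fin N → α) :
    (empiricalMeasure x).map f = empiricalMeasure (fun i => f (x i)) := by
  simp only [empiricalMeasure, ← mapₗ_apply_of_measurable hf, _root_.map_smul, _root_.map_sum]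
  simp only [mapₗ_apply_of_measurable hf, map_dirac' hf]

lemma lintegral_empiricalMeasure [MeasurableSingletonClass α] (x : Fin N → α) (f : α → ℝ≥0∞) :
    ∫⁻ a, f a ∂empiricalMeasure x = (N : ℝ≥0∞)⁻¹ * ∑ i, f (x i) := by
  simp [empiricalMeasure]

lemma isProbabilityMeasure_tsub_smul_add_smul {μ ν : Measure α} [IsProbabilityMeasure μ]
    [IsProbabilityMeasure ν] {l : ℝ≥0∞} (hl : l ≤ 1) :
    IsProbabilityMeasure ((1 - l) • μ + l • ν) := by
  constructor
  simp [tsub_add_cancel_of_le hl]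

section

variable {E : Type*} [AddCommGroup E] [MeasurableSpace E]

noncomputable def shiftCoupling (x : Fin N → E) (l : ℝ≥0∞) (v : E) : Measure (E × E) :=
  (1 - l) • empiricalMeasure (fun i => (x i, x i)) + l • empiricalMeasure (fun i => (x i + v, x i))

lemma isProbabilityMeasure_shiftCoupling [NeZero N] (x : Fin N → E) {l : ℝ≥0∞} (hl : l ≤ 1)
    (v : E) : IsProbabilityMeasure (shiftCoupling x l v) :=
  isProbabilityMeasure_tsub_smul_add_smul hl

lemma map_fst_shiftCoupling (x : Fin N → E) (l : ℝ≥0∞) (v : E) :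
    (shiftCoupling x l v).map Prod.fst =
      (1 - l) • empiricalMeasure x + l • empiricalMeasure (fun i => x i + v) := by
  rw [shiftCoupling, Measure.map_add _ _ measurable_fst, Measure.map_smul, Measure.map_smul,
    map_empiricalMeasure measurable_fst, map_empiricalMeasure measurable_fst]

lemma map_snd_shiftCoupling (x : Fin N → E) {l : ℝ≥0∞} (hl : l ≤ 1) (v : E) :
    (shiftCoupling x l v).map Prod.snd = empiricalMeasure x := by
  rw [shiftCoupling, Measure.map_add _ _ measurable_snd, Measure.map_smul, Measure.map_smul,
    map_empiricalMeasure measurable_snd, map_empiricalMeasure measurable_snd, ← add_smul,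
    tsub_add_cancel_of_le hl, one_smul]

end

lemma lintegral_enorm_sub_shiftCoupling {E : Type*} [SeminormedAddCommGroup E] [MeasurableSpace E]
    [MeasurableSingletonClass E] [NeZero N] (x : Fin N → E) (l : ℝ≥0∞) (v : E) :
    ∫⁻ w, ‖w.1 - w.2‖ₑ ∂shiftCoupling x l v = l * ‖v‖ₑ := by
  simp [shiftCoupling, lintegral_empiricalMeasure, ENNReal.inv_mul_cancel_left, NeZero.ne N,
    enorm_eq_nnnorm]

end MeasureTheory.Measure

section

variable {F : Type*} [SeminormedAddCommGroup F] [NormedSpace ℝ F]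

lemma inv_natCast_mul_enorm_natCast_smul {n : ℕ} (hn : n ≠ 0) (w : F) :
    (n : ℝ≥0∞)⁻¹ * ‖(n : ℝ) • w‖ₑ = ‖w‖ₑ := by
  rw [enorm_smul, Real.enorm_natCast, ENNReal.inv_mul_cancel_left (by simpa) (by simp)]

lemma enorm_add_enorm_le_mix {n : ℕ} (hn : 0 < n) (a w : F) :
    ‖a‖ₑ + ‖w‖ₑ ≤
      (1 - (n : ℝ≥0∞)⁻¹) * ‖a‖ₑ + (n : ℝ≥0∞)⁻¹ * (‖a + (n : ℝ) • w‖ₑ + 2 * ‖a‖ₑ) := by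
  have htri : ‖(n : ℝ) • w‖ₑ ≤ ‖a + (n : ℝ) • w‖ₑ + ‖a‖ₑ := by
    simpa using enorm_sub_le (a := a + (n : ℝ) • w) (b := a)
  calc ‖a‖ₑ + ‖w‖ₑ
      ≤ ((1 - (n : ℝ≥0∞)⁻¹) + (n : ℝ≥0∞)⁻¹) * ‖a‖ₑ
          + (n : ℝ≥0∞)⁻¹ * (‖a + (n : ℝ) • w‖ₑ + ‖a‖ₑ) := by
        rw [tsub_add_cancel_of_le (ENNReal.inv_le_one.2 (by exact_mod_cast hn)), one_mul,
          ← inv_natCast_mul_enorm_natCast_smul hn.ne' w]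
        gcongr
    _ = _ := by ring

end

lemma ContinuousLinearMap.exists_norm_le_ofReal_mul_enorm_le {E F : Type*} [NormedAddCommGroup E]
    [NormedSpace ℝ E] [SeminormedAddCommGroup F] [NormedSpace ℝ F] (T : E →L[ℝ] F) {ε η : ℝ}
    (hε : 0 ≤ ε) (hη : 0 < η) :
    ∃ v, ‖v‖ ≤ ε ∧ ENNReal.ofReal ε * ‖T‖ₑ ≤ ‖T v‖ₑ + ENNReal.ofReal η := by
  rcases hε.eq_or_lt with rfl | hε
  · exact ⟨0, by simp⟩
  obtain ⟨u, hu, hTu⟩ := T.exists_lt_apply_of_lt_opNorm (r := ‖T‖ - η / ε)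
    (by linarith [div_pos hη hε])
  refine ⟨ε • u, ?_, ?_⟩
  · rw [norm_smul, Real.norm_of_nonneg hε.le]
    exact mul_le_of_le_one_right hε.le hu.le
  · rw [← ofReal_norm, ← ofReal_norm, ← ENNReal.ofReal_mul hε.le,
      ← ENNReal.ofReal_add (norm_nonneg _) hη.le, map_smul, norm_smul, Real.norm_of_nonneg hε.le]
    apply ENNReal.ofReal_le_ofReal
    have hεT : ε * (‖T‖ - η / ε) = ε * ‖T‖ - η := by field_simp
    linarith [mul_lt_mul_of_pos_left hTu hε]

open Measure

variable {E F : Type*} [NormedAddCommGroup E] [NormedSpace ℝ E] [MeasurableSpace E]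
  [MeasurableSingletonClass E] [SeminormedAddCommGroup F] [NormedSpace ℝ F] {N : ℕ} [NeZero N]

lemma lintegral_enorm_add_enorm_le_shiftCoupling (T : E →L[ℝ] F) (x : Fin N → E) {n : ℕ}
    (hn : 0 < n) (v : E) :
    ∫⁻ z, ‖T z‖ₑ ∂empiricalMeasure x + ‖T v‖ₑ ≤
      ∫⁻ z, ‖T z‖ₑ ∂(shiftCoupling x (n : ℝ≥0∞)⁻¹ ((n : ℝ) • v)).map Prod.fst +
        2 * (n : ℝ≥0∞)⁻¹ * ∫⁻ z, ‖T z‖ₑ ∂empiricalMeasure x := by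
  set l := (n : ℝ≥0∞)⁻¹
  have hNinv : (N : ℝ≥0∞)⁻¹ * N = 1 := ENNReal.inv_mul_cancel (by simp [NeZero.ne N]) (by simp)
  rw [map_fst_shiftCoupling, lintegral_add_measure, lintegral_smul_measure,
    lintegral_smul_measure]
  simp only [lintegral_empiricalMeasure, map_add, map_smul]
  calc (N : ℝ≥0∞)⁻¹ * ∑ i, ‖T (x i)‖ₑ + ‖T v‖ₑ
      = (N : ℝ≥0∞)⁻¹ * ∑ i, (‖T (x i)‖ₑ + ‖T v‖ₑ) := by
        rw [Finset.sum_add_distrib, mul_add, Finset.sum_const, Finset.card_fin, nsmul_eq_mul,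
          ← mul_assoc, hNinv, one_mul]
    _ ≤ (N : ℝ≥0∞)⁻¹ * ∑ i,
          ((1 - l) * ‖T (x i)‖ₑ + l * (‖T (x i) + (n : ℝ) • T v‖ₑ + 2 * ‖T (x i)‖ₑ)) := by
        gcongr _ * ?_
        exact Finset.sum_le_sum fun i _ => enorm_add_enorm_le_mix hn (T (x i)) (T v)
    _ = _ := by
        simp only [Finset.mul_sum, smul_eq_mul]
        rw [← Finset.sum_add_distrib, ← Finset.sum_add_distrib]
        exact Finset.sum_congr rfl fun i _ => by ring

theorem exists_coupling_empiricalMeasure_lintegral_enorm_ge (T : E →L[ℝ] F) (x : Fin N → E)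
    {ε δ : ℝ} (hε : 0 ≤ ε) (hδ : 0 < δ) :
    ∃ Q : Measure E, ∃ Pl : Measure (E × E),
      IsProbabilityMeasure Q ∧ IsProbabilityMeasure Pl ∧
      Pl.map Prod.fst = Q ∧ Pl.map Prod.snd = empiricalMeasure x ∧
      ∫⁻ w, ‖w.1 - w.2‖ₑ ∂Pl ≤ ENNReal.ofReal ε ∧
      ∫⁻ z, ‖T z‖ₑ ∂empiricalMeasure x + ENNReal.ofReal ε * ‖T‖ₑ - ENNReal.ofReal δ ≤
        ∫⁻ z, ‖T z‖ₑ ∂Q := by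
  set A := ∫⁻ z, ‖T z‖ₑ ∂empiricalMeasure x
  have hA : 2 * A ≠ ∞ := by
    simp [A, lintegral_empiricalMeasure, ENNReal.mul_eq_top, NeZero.ne N]
  obtain ⟨v, hv, hTv⟩ := T.exists_norm_le_ofReal_mul_enorm_le hε (half_pos hδ)
  obtain ⟨n, hn, hnA⟩ := ENNReal.exists_nat_pos_inv_mul_lt hA (ofReal_pos.2 (half_pos hδ)).ne'
  have hl : (n : ℝ≥0∞)⁻¹ ≤ 1 := ENNReal.inv_le_one.2 (by exact_mod_cast hn)
  set Pl := shiftCoupling x (n : ℝ≥0∞)⁻¹ ((n : ℝ) • v)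
  have hPl : IsProbabilityMeasure Pl := isProbabilityMeasure_shiftCoupling x hl _
  refine ⟨Pl.map Prod.fst, Pl, isProbabilityMeasure_map measurable_fst.aemeasurable, hPl, rfl,
    map_snd_shiftCoupling x hl _, ?_, ?_⟩
  · rw [lintegral_enorm_sub_shiftCoupling, inv_natCast_mul_enorm_natCast_smul hn.ne',
      ← ofReal_norm]
    exact ENNReal.ofReal_le_ofReal hv
  · rw [tsub_le_iff_right]
    calc A + ENNReal.ofReal ε * ‖T‖ₑ ≤ A + ‖T v‖ₑ + ENNReal.ofReal (δ / 2) := by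
          rw [add_assoc]; gcongr
      _ ≤ ∫⁻ z, ‖T z‖ₑ ∂Pl.map Prod.fst + 2 * (n : ℝ≥0∞)⁻¹ * A + ENNReal.ofReal (δ / 2) := by
          gcongr ?_ + _
          exact lintegral_enorm_add_enorm_le_shiftCoupling T x hn v
      _ ≤ ∫⁻ z, ‖T z‖ₑ ∂Pl.map Prod.fst + ENNReal.ofReal (δ / 2) + ENNReal.ofReal (δ / 2) := by
          gcongr _ + ?_ + _
          rw [mul_comm 2, mul_assoc]
          exact hnA.le
      _ = _ := by
          rw [add_assoc, ← ENNReal.ofReal_add (half_pos hδ).le (half_pos hδ).le, add_halves]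

theorem stmt3_general
    (p K N : ℕ) (hN : 1 ≤ N)
    (r : ℝ≥0∞) [Fact (1 ≤ r)]
    (ε δ : ℝ) (hε : 0 ≤ ε) (hδ : 0 < δ)
    -- `T` is the continuous linear map `T_B (x, θ) = θ - Bᵀ x` on
    -- `Z = ℝ^p × ℝ^K` equipped with the `ℓ_r` norm, mapping into `ℝ^K` with the `ℓ_r` norm
    (T : WithLp r ((PiLp r fun _ : Fin p => ℝ) × (PiLp r fun _ : Fin K => ℝ)) →L[ℝ]
         (PiLp r fun _ : Fin K => ℝ))
    -- training samples
    (zhat : Fin N → WithLp r ((PiLp r fun _ : Fin p => ℝ) × (PiLp r fun _ : Fin K => ℝ))) :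
    ∃ Q : Measure (WithLp r ((PiLp r fun _ : Fin p => ℝ) × (PiLp r fun _ : Fin K => ℝ))),
      ∃ Pl : Measure ((WithLp r ((PiLp r fun _ : Fin p => ℝ) × (PiLp r fun _ : Fin K => ℝ))) ×
          (WithLp r ((PiLp r fun _ : Fin p => ℝ) × (PiLp r fun _ : Fin K => ℝ)))),
        IsProbabilityMeasure Q ∧ IsProbabilityMeasure Pl ∧
        Pl.map Prod.fst = Q ∧
        Pl.map Prod.snd = (N : ℝ≥0∞)⁻¹ • ∑ i, Measure.dirac (zhat i) ∧
        ∫⁻ w, (‖w.1 - w.2‖₊ : ℝ≥0∞) ∂Pl ≤ ENNReal.ofReal ε ∧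
        (N : ℝ≥0∞)⁻¹ * ∑ i, (‖T (zhat i)‖₊ : ℝ≥0∞) + ENNReal.ofReal ε * (‖T‖₊ : ℝ≥0∞)
          - ENNReal.ofReal δ
          ≤ ∫⁻ z, (‖T z‖₊ : ℝ≥0∞) ∂Q := by
  have : NeZero N := ⟨by omega⟩
  obtain ⟨Q, Pl, hQ, hPl, hfst, hsnd, hcost, hgain⟩ :=
    exists_coupling_empiricalMeasure_lintegral_enorm_ge T zhat hε hδ
  rw [Measure.lintegral_empiricalMeasure] at hgain
  exact ⟨Q, Pl, hQ, hPl, hfst, hsnd, hcost, hgain⟩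

theorem stmt3
    (p K N : ℕ) (hp : 1 ≤ p) (hK : 1 ≤ K) (hN : 1 ≤ N)
    (r : ℝ≥0∞) [Fact (1 ≤ r)] (hr' : r ≠ ∞)
    (B : Matrix (Fin p) (Fin K) ℝ)
    (ε δ : ℝ) (hε : 0 ≤ ε) (hδ : 0 < δ)
    -- `T` is the continuous linear map `T_B (x, θ) = θ - Bᵀ x` on
    -- `Z = ℝ^p × ℝ^K` equipped with the `ℓ_r` norm, mapping into `ℝ^K` with the `ℓ_r` norm
    (T : WithLp r ((PiLp r fun _ : Fin p => ℝ) × (PiLp r fun _ : Fin K => ℝ)) →L[ℝ]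
         (PiLp r fun _ : Fin K => ℝ))
    (hT : ∀ z, (WithLp.equiv r _) (T z) =
        (WithLp.equiv r _) ((WithLp.equiv r _ z).2) -
          Matrix.mulVec B.transpose ((WithLp.equiv r _) ((WithLp.equiv r _ z).1)))
    -- training samples
    (zhat : Fin N → WithLp r ((PiLp r fun _ : Fin p => ℝ) × (PiLp r fun _ : Fin K => ℝ))) :
    ∃ Q : Measure (WithLp r ((PiLp r fun _ : Fin p => ℝ) × (PiLp r fun _ : Fin K => ℝ))),
      ∃ Pl : Measure ((WithLp r ((PiLp r fun _ : Fin p => ℝ) × (PiLp r fun _ : Fin K => ℝ))) ×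
          (WithLp r ((PiLp r fun _ : Fin p => ℝ) × (PiLp r fun _ : Fin K => ℝ)))),
        IsProbabilityMeasure Q ∧ IsProbabilityMeasure Pl ∧
        Pl.map Prod.fst = Q ∧
        Pl.map Prod.snd = (N : ℝ≥0∞)⁻¹ • ∑ i, Measure.dirac (zhat i) ∧
        ∫⁻ w, (‖w.1 - w.2‖₊ : ℝ≥0∞) ∂Pl ≤ ENNReal.ofReal ε ∧
        (N : ℝ≥0∞)⁻¹ * ∑ i, (‖T (zhat i)‖₊ : ℝ≥0∞) + ENNReal.ofReal ε * (‖T‖₊ : ℝ≥0∞)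
          - ENNReal.ofReal δ
          ≤ ∫⁻ z, (‖T z‖₊ : ℝ≥0∞) ∂Q :=
  stmt3_general p K N hN r ε δ hε hδ T zhat
end

section
/- Let E and F be real normed vector spaces, A : E → F a continuous linear map, ẑ_1, …, ẑ_N ∈ E with N ≥ 1, and ε > 0. Then the dual objective of the inner Wasserstein maximization satisfies inf_{λ ≥ 0} [ λ·ε + (1/N) ∑_{i=1}^N sup_{z ∈ E} ( ‖A z‖ − λ ‖z − ẑ_i‖ ) ] = ε·‖A‖ + (1/N) ∑_{i=1}^N ‖A ẑ_i‖, where for each λ the inner supremum is taken in the extended reals (it equals +∞ when λ < ‖A‖ and ‖A ẑ_i‖ when λ ≥ ‖A‖), and the infimum over λ is attained at λ = ‖A‖. -/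
/-! A penalty `λ ‖z - ẑ‖` with `λ ≥ ‖A‖` dominates the growth of the `‖A‖`-Lipschitz function
`z ↦ ‖A z‖`, so the inner supremum is attained at `z = ẑ`. For `λ < ‖A‖` there is a direction
`u` with `λ ‖u‖ < ‖A u‖`, and along the ray `ẑ + t u` the objective grows linearly in `t`, so the
supremum is `∞`. Hence the dual objective is `∞` on `[0, ‖A‖)` and increasing on `[‖A‖, ∞)`. -/

open ENNReal

theorem LipschitzWith.iSup_ofReal_sub_mul_dist_eq {α : Type*} [PseudoMetricSpace α]
    {f : α → ℝ} {K : NNReal} (hf : LipschitzWith K f) {lam : ℝ} (hlam : (K : ℝ) ≤ lam) (w : α) :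
    ⨆ z, ENNReal.ofReal (f z - lam * dist z w) = ENNReal.ofReal (f w) := by
  refine le_antisymm (iSup_le fun z => ENNReal.ofReal_le_ofReal ?_) ?_
  · have hK : f z - f w ≤ K * dist z w := (le_abs_self _).trans (hf.dist_le_mul z w)
    have hKlam : (K : ℝ) * dist z w ≤ lam * dist z w := by gcongr
    linarith
  · exact le_iSup_of_le w (by simp)

namespace ContinuousLinearMap

variable {E F : Type*} [NormedAddCommGroup E] [NormedSpace ℝ E]
  [NormedAddCommGroup F] [NormedSpace ℝ F] (A : E →L[ℝ] F)

theorem iSup_ofReal_norm_apply_sub_mul_norm_sub_eq {lam : ℝ} (hlam : ‖A‖ ≤ lam) (w : E) :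
    ⨆ z, ENNReal.ofReal (‖A z‖ - lam * ‖z - w‖) = ENNReal.ofReal ‖A w‖ := by
  have hLip : LipschitzWith (1 * ‖A‖₊) fun z => ‖A z‖ := lipschitzWith_one_norm.comp A.lipschitz
  simp_rw [← dist_eq_norm]
  exact hLip.iSup_ofReal_sub_mul_dist_eq (by simpa using hlam) w

theorem iSup_ofReal_norm_apply_sub_mul_norm_sub_eq_top {lam : ℝ} (hlam₀ : 0 ≤ lam)
    (hlam : lam < ‖A‖) (w : E) :
    ⨆ z, ENNReal.ofReal (‖A z‖ - lam * ‖z - w‖) = ∞ := by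
  obtain ⟨u, hu₁, hu⟩ := A.exists_lt_apply_of_lt_opNorm hlam
  set c := ‖A u‖ - lam * ‖u‖
  have hc : 0 < c := by nlinarith [norm_nonneg u]
  have hray : ∀ t : ℝ, 0 ≤ t → t * c - ‖A w‖ ≤ ‖A (w + t • u)‖ - lam * ‖w + t • u - w‖ := by
    intro t ht
    have hAtu : t * ‖A u‖ ≤ ‖A (w + t • u)‖ + ‖A w‖ := calc
      t * ‖A u‖ = ‖A (w + t • u) - A w‖ := by
        rw [← map_sub, add_sub_cancel_left, map_smul, norm_smul, Real.norm_of_nonneg ht]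
      _ ≤ ‖A (w + t • u)‖ + ‖A w‖ := norm_sub_le _ _
    rw [add_sub_cancel_left, norm_smul, Real.norm_of_nonneg ht]
    linarith
  refine ENNReal.eq_top_of_forall_nnreal_le fun r => ?_
  set t := (r + ‖A w‖) / c
  have ht : 0 ≤ t := by positivity
  calc (r : ℝ≥0∞) = ENNReal.ofReal (t * c - ‖A w‖) := by
        rw [div_mul_cancel₀ _ hc.ne', add_sub_cancel_right, ofReal_coe_nnreal]
    _ ≤ ENNReal.ofReal (‖A (w + t • u)‖ - lam * ‖w + t • u - w‖) :=
        ENNReal.ofReal_le_ofReal (hray t ht)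
    _ ≤ ⨆ z, ENNReal.ofReal (‖A z‖ - lam * ‖z - w‖) := le_iSup_of_le (w + t • u) le_rfl

end ContinuousLinearMap

theorem stmt6_general
    {E F : Type*} [NormedAddCommGroup E] [NormedSpace ℝ E]
    [NormedAddCommGroup F] [NormedSpace ℝ F]
    (A : E →L[ℝ] F) (N : ℕ) (hN : 1 ≤ N) (zhat : Fin N → E)
    (ε : ℝ) :
    (⨅ (lam : ℝ) (_ : 0 ≤ lam),
        ENNReal.ofReal lam * ENNReal.ofReal ε +
          (N : ℝ≥0∞)⁻¹ * ∑ i, ⨆ z : E, ENNReal.ofReal (‖A z‖ - lam * ‖z - zhat i‖))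
      = ENNReal.ofReal ε * (‖A‖₊ : ℝ≥0∞) + (N : ℝ≥0∞)⁻¹ * ∑ i, (‖A (zhat i)‖₊ : ℝ≥0∞)
    ∧ ENNReal.ofReal ‖A‖ * ENNReal.ofReal ε +
          (N : ℝ≥0∞)⁻¹ * ∑ i, ⨆ z : E, ENNReal.ofReal (‖A z‖ - ‖A‖ * ‖z - zhat i‖)
      = ENNReal.ofReal ε * (‖A‖₊ : ℝ≥0∞) + (N : ℝ≥0∞)⁻¹ * ∑ i, (‖A (zhat i)‖₊ : ℝ≥0∞) := by
  have hattained : ENNReal.ofReal ‖A‖ * ENNReal.ofReal ε +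
          (N : ℝ≥0∞)⁻¹ * ∑ i, ⨆ z : E, ENNReal.ofReal (‖A z‖ - ‖A‖ * ‖z - zhat i‖)
      = ENNReal.ofReal ε * (‖A‖₊ : ℝ≥0∞) + (N : ℝ≥0∞)⁻¹ * ∑ i, (‖A (zhat i)‖₊ : ℝ≥0∞) := by
    simp_rw [A.iSup_ofReal_norm_apply_sub_mul_norm_sub_eq le_rfl, ofReal_norm, enorm_eq_nnnorm,
      mul_comm]
  refine ⟨le_antisymm ((iInf₂_le ‖A‖ (norm_nonneg A)).trans_eq hattained) ?_, hattained⟩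
  refine le_iInf₂ fun lam hlam₀ => ?_
  rcases le_or_gt ‖A‖ lam with hlam | hlam
  · simp_rw [A.iSup_ofReal_norm_apply_sub_mul_norm_sub_eq hlam, ← enorm_eq_nnnorm, ← ofReal_norm,
      mul_comm (ENNReal.ofReal ε)]
    gcongr
  · have hsum : ∑ i, ⨆ z : E, ENNReal.ofReal (‖A z‖ - lam * ‖z - zhat i‖) = ∞ :=
      ENNReal.sum_eq_top.mpr ⟨⟨0, hN⟩, Finset.mem_univ _,
        A.iSup_ofReal_norm_apply_sub_mul_norm_sub_eq_top hlam₀ hlam _⟩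
    simp [hsum]

theorem stmt6
    {E F : Type*} [NormedAddCommGroup E] [NormedSpace ℝ E]
    [NormedAddCommGroup F] [NormedSpace ℝ F]
    (A : E →L[ℝ] F) (N : ℕ) (hN : 1 ≤ N) (zhat : Fin N → E)
    (ε : ℝ) (hε : 0 < ε) :
    (⨅ (lam : ℝ) (_ : 0 ≤ lam),
        ENNReal.ofReal lam * ENNReal.ofReal ε +
          (N : ℝ≥0∞)⁻¹ * ∑ i, ⨆ z : E, ENNReal.ofReal (‖A z‖ - lam * ‖z - zhat i‖))
      = ENNReal.ofReal ε * (‖A‖₊ : ℝ≥0∞) + (N : ℝ≥0∞)⁻¹ * ∑ i, (‖A (zhat i)‖₊ : ℝ≥0∞)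
    ∧ ENNReal.ofReal ‖A‖ * ENNReal.ofReal ε +
          (N : ℝ≥0∞)⁻¹ * ∑ i, ⨆ z : E, ENNReal.ofReal (‖A z‖ - ‖A‖ * ‖z - zhat i‖)
      = ENNReal.ofReal ε * (‖A‖₊ : ℝ≥0∞) + (N : ℝ≥0∞)⁻¹ * ∑ i, (‖A (zhat i)‖₊ : ℝ≥0∞) :=
  stmt6_general A N hN zhat ε
end
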